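/- If E₁, E₂ ⊆ M_{n×n}(F) are sets whose closures are irreducible algebraic cones over an algebraically closed field F of characteristic zero, then the linear capacity satisfies Λ(E₁ × E₂) = Λ(E₁) + Λ(E₂), where Λ(E) is the maximal dimension of a linear subspace contained in the closure of E. -/

import Mathlib

/-- The Zariski topology on an affine coordinate space `σ → F`. -/
noncomputable def coordZariski (σ F : Type*) [CommRing F] : TopologicalSpace (σ → F) :=
  TopologicalSpace.generateFrom
    {U | ∃ p : MvPolynomial σ F, U = {x | MvPolynomial.eval x p ≠ 0}}

/-- The Zariski topology on `n × n` matrices over `F`. -/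
noncomputable def matrixZariski (n : ℕ) (F : Type*) [CommRing F] :
    TopologicalSpace (Matrix (Fin n) (Fin n) F) :=
  TopologicalSpace.induced (fun M (c : Fin n × Fin n) => M c.1 c.2)
    (coordZariski (Fin n × Fin n) F)

/-- The Zariski topology on pairs of `n × n` matrices over `F`. -/
noncomputable def matrixPairZariski (n : ℕ) (F : Type*) [CommRing F] :
    TopologicalSpace (Matrix (Fin n) (Fin n) F × Matrix (Fin n) (Fin n) F) :=
  TopologicalSpace.induced
    (fun M (c : (Fin n × Fin n) ⊕ (Fin n × Fin n)) =>
      Sum.elim (fun c => M.1 c.1 c.2) (fun c => M.2 c.1 c.2) c)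
    (coordZariski ((Fin n × Fin n) ⊕ (Fin n × Fin n)) F)

/-- The linear capacity of a subset of the matrix space: the maximal dimension of a
linear subspace contained in its (Zariski) closure. -/
noncomputable def linCap {n : ℕ} {F : Type*} [Field F]
    (E : Set (Matrix (Fin n) (Fin n) F)) : ℕ :=
  sSup {d | ∃ L : Submodule F (Matrix (Fin n) (Fin n) F),
    (L : Set (Matrix (Fin n) (Fin n) F)) ⊆ @closure _ (matrixZariski n F) E ∧
    Module.finrank F L = d}

/-- The linear capacity of a subset of the space of pairs of matrices. -/
noncomputable def linCapPair {n : ℕ} {F : Type*} [Field F]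
    (E : Set (Matrix (Fin n) (Fin n) F × Matrix (Fin n) (Fin n) F)) : ℕ :=
  sSup {d | ∃ L : Submodule F (Matrix (Fin n) (Fin n) F × Matrix (Fin n) (Fin n) F),
    (L : Set (Matrix (Fin n) (Fin n) F × Matrix (Fin n) (Fin n) F)) ⊆
      @closure _ (matrixPairZariski n F) E ∧
    Module.finrank F L = d}

/-!
The Zariski closure of `E₁ × E₂` is the product of the closures: the projections and the
slices `x ↦ (x, b)`, `y ↦ (a, y)` are polynomial maps, hence continuous. For sets `A`, `B`
containing `0`, a subspace `L ⊆ A × B` sits inside the product of its two projections, which are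
subspaces of `A` and `B`, while a product `L₁ × L₂` of maximal subspaces of `A` and `B` lies in
`A × B`; so the capacities add. The cone condition on a nonempty closure puts `0` in it.
-/

open MvPolynomial Topology

section Zariski

variable {F : Type*} [CommRing F]

theorem continuous_coordZariski_eval {σ τ : Type*} (q : τ → MvPolynomial σ F) :
    Continuous[coordZariski σ F, coordZariski τ F] (fun x t => eval x (q t)) := by
  unfold coordZariski
  rw [continuous_generateFrom_iff]
  rintro U ⟨p, rfl⟩
  have hpre : (fun x t => eval x (q t)) ⁻¹' {y | eval y p ≠ 0} =
      {x | eval x (bind₁ q p) ≠ 0} := by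
    ext x
    exact (congrArg (· ≠ 0) (eval₂Hom_bind₁ (RingHom.id F) x q p)).to_iff.symm
  rw [hpre]
  exact TopologicalSpace.isOpen_generateFrom_of_mem ⟨_, rfl⟩

theorem continuous_induced_coordZariski {X Y σ τ : Type*} (f : X → σ → F) (g : Y → τ → F)
    (φ : X → Y) (q : τ → MvPolynomial σ F) (hφ : ∀ x t, g (φ x) t = eval (f x) (q t)) :
    Continuous[.induced f (coordZariski σ F), .induced g (coordZariski τ F)] φ := by
  let := coordZariski σ F
  let := coordZariski τ F
  let := TopologicalSpace.induced f (coordZariski σ F)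
  refine continuous_induced_rng.2 ?_
  have hcomp : g ∘ φ = (fun x t => eval x (q t)) ∘ f := funext₂ hφ
  rw [hcomp]
  exact (continuous_coordZariski_eval q).comp continuous_induced_dom

end Zariski

theorem closure_prod_eq_of_continuous {X Y : Type*} [TopologicalSpace X] [TopologicalSpace Y]
    (t : TopologicalSpace (X × Y)) (hfst : Continuous[t, ‹_›] Prod.fst)
    (hsnd : Continuous[t, ‹_›] Prod.snd) (hmk_left : ∀ y : Y, Continuous[‹_›, t] (·, y))
    (hmk_right : ∀ x : X, Continuous[‹_›, t] (x, ·)) (s : Set X) (u : Set Y) :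
    closure[t] (s ×ˢ u) = closure s ×ˢ closure u := by
  refine subset_antisymm ?_ ?_
  · refine @closure_minimal _ t _ _ (Set.prod_mono subset_closure subset_closure) ?_
    rw [Set.prod_eq]
    exact (isClosed_closure.preimage hfst).inter (isClosed_closure.preimage hsnd)
  · have hleft : ∀ y ∈ u, closure s ⊆ (·, y) ⁻¹' (closure[t] (s ×ˢ u)) := fun y hy =>
      closure_minimal (fun x hx => @subset_closure _ t _ _ ⟨hx, hy⟩)
        (@isClosed_closure _ t _ |>.preimage (hmk_left y))
    rintro ⟨x, y⟩ ⟨hx, hy⟩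
    exact closure_minimal (fun y' hy' => hleft y' hy' hx)
      (@isClosed_closure _ t _ |>.preimage (hmk_right x)) hy

section Matrix

variable {n : ℕ} {F : Type*} [CommRing F]

theorem matrixPairZariski_continuous_fst :
    Continuous[matrixPairZariski n F, matrixZariski n F] Prod.fst :=
  continuous_induced_coordZariski _ _ _ (fun c => X (Sum.inl c)) fun _ _ => by simp

theorem matrixPairZariski_continuous_snd :
    Continuous[matrixPairZariski n F, matrixZariski n F] Prod.snd :=
  continuous_induced_coordZariski _ _ _ (fun c => X (Sum.inr c)) fun _ _ => by simp

theorem matrixPairZariski_continuous_mk_left (B : Matrix (Fin n) (Fin n) F) :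
    Continuous[matrixZariski n F, matrixPairZariski n F] (·, B) :=
  continuous_induced_coordZariski _ _ _ (Sum.elim X fun c => C (B c.1 c.2)) <| by
    rintro _ (_ | _) <;> simp

theorem matrixPairZariski_continuous_mk_right (A : Matrix (Fin n) (Fin n) F) :
    Continuous[matrixZariski n F, matrixPairZariski n F] (A, ·) :=
  continuous_induced_coordZariski _ _ _ (Sum.elim (fun c => C (A c.1 c.2)) X) <| by
    rintro _ (_ | _) <;> simp

theorem closure_matrixPairZariski_prod (E₁ E₂ : Set (Matrix (Fin n) (Fin n) F)) :
    closure[matrixPairZariski n F] (E₁ ×ˢ E₂) =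
      closure[matrixZariski n F] E₁ ×ˢ closure[matrixZariski n F] E₂ :=
  @closure_prod_eq_of_continuous _ _ (matrixZariski n F) (matrixZariski n F) _
    matrixPairZariski_continuous_fst matrixPairZariski_continuous_snd
    matrixPairZariski_continuous_mk_left matrixPairZariski_continuous_mk_right E₁ E₂

end Matrix

section LinearCapacity

open Module

variable (K : Type*) {V W : Type*} [Field K] [AddCommGroup V] [Module K V]
  [AddCommGroup W] [Module K W]

/-- A set not containing `0` contains no subspace and gets the junk capacity `sSup ∅ = 0`. -/
noncomputable def linearCapacity (A : Set V) : ℕ :=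
  sSup {d | ∃ L : Submodule K V, (L : Set V) ⊆ A ∧ finrank K L = d}

variable {K}

theorem bddAbove_finrank_submodule_subset [FiniteDimensional K V] (A : Set V) :
    BddAbove {d | ∃ L : Submodule K V, (L : Set V) ⊆ A ∧ finrank K L = d} :=
  ⟨finrank K V, by rintro _ ⟨L, -, rfl⟩; exact L.finrank_le⟩

theorem finrank_le_linearCapacity [FiniteDimensional K V] {A : Set V} {L : Submodule K V}
    (hL : (L : Set V) ⊆ A) : finrank K L ≤ linearCapacity K A :=
  le_csSup (bddAbove_finrank_submodule_subset A) ⟨L, hL, rfl⟩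

theorem linearCapacity_le {A : Set V} {d : ℕ}
    (h : ∀ L : Submodule K V, (L : Set V) ⊆ A → finrank K L ≤ d) : linearCapacity K A ≤ d :=
  csSup_le' <| by rintro _ ⟨L, hL, rfl⟩; exact h L hL

theorem exists_finrank_eq_linearCapacity [FiniteDimensional K V] {A : Set V}
    (hA : (0 : V) ∈ A) :
    ∃ L : Submodule K V, (L : Set V) ⊆ A ∧ finrank K L = linearCapacity K A := by
  refine Nat.sSup_mem ?_ (bddAbove_finrank_submodule_subset A)
  exact ⟨0, ⊥, by simpa using hA, finrank_bot K V⟩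

theorem Submodule.finrank_prod (p : Submodule K V) (q : Submodule K W) [Module.Finite K p]
    [Module.Finite K q] : finrank K (p.prod q) = finrank K p + finrank K q := by
  let e : p.prod q ≃ₗ[K] p × q :=
    { toFun x := (⟨x.1.1, x.2.1⟩, ⟨x.1.2, x.2.2⟩)
      invFun y := ⟨(y.1, y.2), y.1.2, y.2.2⟩
      map_add' _ _ := rfl
      map_smul' _ _ := rfl
      left_inv _ := rfl
      right_inv _ := rfl }
  rw [e.finrank_eq, Module.finrank_prod]

theorem linearCapacity_prod [FiniteDimensional K V] [FiniteDimensional K W] {A : Set V}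
    {B : Set W} (hA : (0 : V) ∈ A) (hB : (0 : W) ∈ B) :
    linearCapacity K (A ×ˢ B) = linearCapacity K A + linearCapacity K B := by
  refine le_antisymm (linearCapacity_le fun L hL => ?_) ?_
  · have hfst : (L.map (LinearMap.fst K V W) : Set V) ⊆ A := by
      rintro _ ⟨x, hx, rfl⟩
      exact (hL hx).1
    have hsnd : (L.map (LinearMap.snd K V W) : Set W) ⊆ B := by
      rintro _ ⟨x, hx, rfl⟩
      exact (hL hx).2
    calc finrank K L
        ≤ finrank K ((L.map (LinearMap.fst K V W)).prod (L.map (LinearMap.snd K V W))) :=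
          Submodule.finrank_mono fun _ hx =>
            ⟨Submodule.mem_map_of_mem hx, Submodule.mem_map_of_mem hx⟩
      _ = finrank K (L.map (LinearMap.fst K V W)) + finrank K (L.map (LinearMap.snd K V W)) :=
          Submodule.finrank_prod _ _
      _ ≤ linearCapacity K A + linearCapacity K B :=
          add_le_add (finrank_le_linearCapacity hfst) (finrank_le_linearCapacity hsnd)
  · obtain ⟨L₁, hL₁, hrank₁⟩ := exists_finrank_eq_linearCapacity (K := K) hA
    obtain ⟨L₂, hL₂, hrank₂⟩ := exists_finrank_eq_linearCapacity (K := K) hB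
    calc linearCapacity K A + linearCapacity K B = finrank K (L₁.prod L₂) := by
          rw [Submodule.finrank_prod, hrank₁, hrank₂]
      _ ≤ linearCapacity K (A ×ˢ B) :=
          finrank_le_linearCapacity fun _ hx => ⟨hL₁ hx.1, hL₂ hx.2⟩

end LinearCapacity

theorem linear_capacity_prod_general {n : ℕ} {F : Type*} [Field F]
    (E₁ E₂ : Set (Matrix (Fin n) (Fin n) F))
    (h₁ : @IsIrreducible _ (matrixZariski n F) (@closure _ (matrixZariski n F) E₁))
    (h₂ : @IsIrreducible _ (matrixZariski n F) (@closure _ (matrixZariski n F) E₂))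
    (hcone₁ : ∀ (c : F), ∀ x ∈ @closure _ (matrixZariski n F) E₁,
      c • x ∈ @closure _ (matrixZariski n F) E₁)
    (hcone₂ : ∀ (c : F), ∀ x ∈ @closure _ (matrixZariski n F) E₂,
      c • x ∈ @closure _ (matrixZariski n F) E₂) :
    linCapPair (E₁ ×ˢ E₂) = linCap E₁ + linCap E₂ := by
  obtain ⟨x₁, hx₁⟩ := h₁.1
  obtain ⟨x₂, hx₂⟩ := h₂.1
  have h0₁ : 0 ∈ closure[matrixZariski n F] E₁ := zero_smul F x₁ ▸ hcone₁ 0 x₁ hx₁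
  have h0₂ : 0 ∈ closure[matrixZariski n F] E₂ := zero_smul F x₂ ▸ hcone₂ 0 x₂ hx₂
  rw [linCapPair, closure_matrixPairZariski_prod]
  exact linearCapacity_prod h0₁ h0₂

theorem linear_capacity_prod {n : ℕ} {F : Type*} [Field F] [IsAlgClosed F] [CharZero F]
    (E₁ E₂ : Set (Matrix (Fin n) (Fin n) F))
    (h₁ : @IsIrreducible _ (matrixZariski n F) (@closure _ (matrixZariski n F) E₁))
    (h₂ : @IsIrreducible _ (matrixZariski n F) (@closure _ (matrixZariski n F) E₂))
    (hcone₁ : ∀ (c : F), ∀ x ∈ @closure _ (matrixZariski n F) E₁,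
      c • x ∈ @closure _ (matrixZariski n F) E₁)
    (hcone₂ : ∀ (c : F), ∀ x ∈ @closure _ (matrixZariski n F) E₂,
      c • x ∈ @closure _ (matrixZariski n F) E₂) :
    linCapPair (E₁ ×ˢ E₂) = linCap E₁ + linCap E₂ :=
  linear_capacity_prod_general E₁ E₂ h₁ h₂ hcone₁ hcone₂
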